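/- The lifted gluing function W satisfies the boundary conditions: W(s) = W(1/s) for every real s < 0, and W(s) = W(e^{2iβ}/s) for every s of the form s = −r·e^{iβ} with r > 0. -/
import Mathlib


/-- The lifted gluing function
`W(s) = −(1/2)(exp((π/β)·Log(−s)) + exp(−(π/β)·Log(−s)))`. -/
noncomputable def Wfun (β : ℝ) (s : ℂ) : ℂ :=
  -(1 / 2) * (Complex.exp (((Real.pi / β : ℝ) : ℂ) * Complex.log (-s)) +
    Complex.exp (-((Real.pi / β : ℝ) : ℂ) * Complex.log (-s)))

/-- The boundary conditions for the lifted gluing function: `W(s) = W(1/s)` for real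
`s < 0`, and `W(s) = W(e^{2iβ}/s)` for `s = −r·e^{iβ}`, `r > 0`. -/
theorem stmt13 (σ11 σ12 σ22 : ℝ)
    (h11 : 0 < σ11) (h22 : 0 < σ22) (hdet : 0 < σ11 * σ22 - σ12 ^ 2)
    (β : ℝ) (hβ : β = Real.arccos (-σ12 / Real.sqrt (σ11 * σ22))) :
    (∀ s : ℝ, s < 0 → Wfun β (s : ℂ) = Wfun β (1 / (s : ℂ))) ∧
    (∀ r : ℝ, 0 < r →
      Wfun β (-(r : ℂ) * Complex.exp ((β : ℂ) * Complex.I)) =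
        Wfun β (Complex.exp (2 * (β : ℂ) * Complex.I) /
          (-(r : ℂ) * Complex.exp ((β : ℂ) * Complex.I)))) := by
  have ht : 0 < Real.sqrt (σ11 * σ22) := Real.sqrt_pos.2 (by nlinarith)
  have hsq : σ12 ^ 2 < Real.sqrt (σ11 * σ22) ^ 2 := by
    rw [Real.sq_sqrt (by nlinarith : (0:ℝ) ≤ σ11 * σ22)]; linarith
  have hx1 : -σ12 / Real.sqrt (σ11 * σ22) < 1 := by
    rw [div_lt_one ht]
    nlinarith
  have hβ0 : 0 < β := by
    rw [hβ]; exact Real.arccos_pos.2 hx1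
  have hβπ : β ≤ Real.pi := by rw [hβ]; exact Real.arccos_le_pi _
  have hβne : (β : ℂ) ≠ 0 := by exact_mod_cast hβ0.ne'
  constructor
  · intro s hs
    have hspos : (0:ℝ) < -s := by linarith
    have h1 : -((s : ℂ)) = ((-s : ℝ) : ℂ) := by push_cast; ring
    have h2 : -(1 / (s : ℂ)) = (((-s)⁻¹ : ℝ) : ℂ) := by
      push_cast
      ring
    have hlog1 : Complex.log (-(s : ℂ)) = ((Real.log (-s) : ℝ) : ℂ) := by
      rw [h1, ← Complex.ofReal_log hspos.le]
    have hlog2 : Complex.log (-(1 / (s : ℂ))) = -((Real.log (-s) : ℝ) : ℂ) := by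
      rw [h2, ← Complex.ofReal_log (inv_nonneg.2 hspos.le), Real.log_inv]
      push_cast; ring
    unfold Wfun
    rw [hlog1, hlog2]
    simp only [neg_mul, mul_neg, neg_neg]
    ring
  · intro r hr
    set L : ℂ := (Real.log r : ℂ)
    have hexp : Complex.exp L = (r : ℂ) := by
      rw [show L = ((Real.log r : ℝ) : ℂ) from rfl, ← Complex.ofReal_exp, Real.exp_log hr]
    have hrne : (r : ℂ) ≠ 0 := by exact_mod_cast hr.ne'
    have hE : Complex.exp ((β : ℂ) * Complex.I) ≠ 0 := Complex.exp_ne_zero _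
    have him1 : (L + (β : ℂ) * Complex.I).im = β := by simp [L]
    have him2 : (-L + (β : ℂ) * Complex.I).im = β := by simp [L]
    have hne1 : -((-(r : ℂ)) * Complex.exp ((β : ℂ) * Complex.I)) =
        Complex.exp (L + (β : ℂ) * Complex.I) := by
      rw [Complex.exp_add, hexp]; ring
    have hne2 : -(Complex.exp (2 * (β : ℂ) * Complex.I) /
        ((-(r : ℂ)) * Complex.exp ((β : ℂ) * Complex.I))) =
        Complex.exp (-L + (β : ℂ) * Complex.I) := by
      rw [Complex.exp_add, Complex.exp_neg, hexp,
        show (2 : ℂ) * (β : ℂ) * Complex.I = (β : ℂ) * Complex.I + (β : ℂ) * Complex.I by ring,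
        Complex.exp_add]
      field_simp
    have hlog1 : Complex.log (-((-(r : ℂ)) * Complex.exp ((β : ℂ) * Complex.I))) =
        L + (β : ℂ) * Complex.I := by
      rw [hne1]; exact Complex.log_exp (by rw [him1]; linarith [Real.pi_pos]) (by rw [him1]; exact hβπ)
    have hlog2 : Complex.log (-(Complex.exp (2 * (β : ℂ) * Complex.I) /
        ((-(r : ℂ)) * Complex.exp ((β : ℂ) * Complex.I)))) =
        -L + (β : ℂ) * Complex.I := by
      rw [hne2]; exact Complex.log_exp (by rw [him2]; linarith [Real.pi_pos]) (by rw [him2]; exact hβπ)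
    unfold Wfun
    rw [hlog1, hlog2]
    have hc : ((Real.pi / β : ℝ) : ℂ) * ((β : ℂ) * Complex.I) = (Real.pi : ℂ) * Complex.I := by
      push_cast
      field_simp
    set c : ℂ := ((Real.pi / β : ℝ) : ℂ)
    have e1 : c * (L + (β : ℂ) * Complex.I) = c * L + (Real.pi : ℂ) * Complex.I := by
      rw [mul_add, hc]
    have e2 : -c * (L + (β : ℂ) * Complex.I) = -(c * L) + -((Real.pi : ℂ) * Complex.I) := by
      rw [neg_mul, mul_add, hc]; ring
    have e3 : c * (-L + (β : ℂ) * Complex.I) = -(c * L) + (Real.pi : ℂ) * Complex.I := by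
      rw [mul_add, hc]; ring
    have e4 : -c * (-L + (β : ℂ) * Complex.I) = c * L + -((Real.pi : ℂ) * Complex.I) := by
      rw [neg_mul, mul_add, hc]; ring
    have hnegpi : Complex.exp (-((Real.pi : ℂ) * Complex.I)) = -1 := by
      rw [Complex.exp_neg, Complex.exp_pi_mul_I]; norm_num
    rw [e1, e2, e3, e4, Complex.exp_add, Complex.exp_add, Complex.exp_add, Complex.exp_add,
      Complex.exp_pi_mul_I, hnegpi]
    ring
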